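/- arXiv:1301.7057 — 2 statements merged into one kernel-verified Lean document; each statement's English description precedes it below -/
import Mathlib

section
/- Let I ⊃ [0,∞) be an open interval and let f : I → (0,∞) be differentiable on I with f' integrable on (a,b), where 0 ≤ a < b < ∞. Suppose |f'| is α-logarithmically convex on [0, b] for some α ∈ (0,1], and set η = |f'(a)| / |f'(b)|. Then: if η = 1, |(f(a)+f(b))/2 − (1/(b−a))·∫_a^b f(x) dx| ≤ ((b−a)/3)·|f'(b)|; and if η < 1, |(f(a)+f(b))/2 − (1/(b−a))·∫_a^b f(x) dx| ≤ ((b−a)/2)·|f'(b)|·(4η^α − 4α·ln η − 2α²·(ln η)² − 4)/(2α³·(ln η)³). -/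
/-!
Integration by parts turns the trapezoid error into `(b - a)⁻¹ ∫ₐᵇ (x - m) f'(x) dx`, with `m`
the midpoint. Writing `x = t a + (1 - t) b`, α-log-convexity and `α t ≤ t ^ α` give
`|f'(x)| ≤ |f'(b)| η ^ (α t)`, an increasing exponential majorant `G`. The derivative has constant
sign on `(a, b)`: a zero of `f'` in `[a, b]` forces `f' = 0` on `(a, b)` by log-convexity, and
otherwise Darboux's theorem applies. With constant sign the two halves of `[a, b]` contribute with
opposite signs, and reflection about `m` shows `∫ₐᵐ (m - x) G ≤ ∫ₘᵇ (x - m) G`; so the error is at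
most `(b - a)⁻¹ ∫ₘᵇ (x - m) G`, which is computed in closed form. For `η < 1` the comparison with
the stated bound reduces to `exp u ≤ 1 + u exp (u / 2)` for `u = α log η < 0`, i.e. `v ≤ sinh v`.
-/

open MeasureTheory Real Set intervalIntegral

def IsAlphaLogConvexOn (α : ℝ) (s : Set ℝ) (g : ℝ → ℝ) : Prop :=
  ∀ x ∈ s, ∀ y ∈ s, ∀ t ∈ Icc (0 : ℝ) 1,
    g (t * x + (1 - t) * y) ≤ g x ^ (t ^ α) * g y ^ (1 - t ^ α)

namespace IsAlphaLogConvexOn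

variable {α a b : ℝ} {s : Set ℝ} {g : ℝ → ℝ}

theorem mono (hg : IsAlphaLogConvexOn α s g) {s' : Set ℝ} (hs' : s' ⊆ s) :
    IsAlphaLogConvexOn α s' g :=
  fun x hx y hy => hg x (hs' hx) y (hs' hy)

theorem nonpos_of_mem_openSegment (hg : IsAlphaLogConvexOn α s g) {x y z : ℝ} (hx : x ∈ s)
    (hy : y ∈ s) (hgx : g x = 0) (hz : z ∈ openSegment ℝ x y) : g z ≤ 0 := by
  obtain ⟨p, q, hp, hq, hpq, rfl⟩ := hz
  obtain rfl : q = 1 - p := by linarith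
  simpa [hgx, zero_rpow (rpow_pos_of_pos hp α).ne'] using
    hg x hx y hy p ⟨hp.le, by linarith⟩

theorem nonpos_on_Ioo (hg : IsAlphaLogConvexOn α (Icc a b) g) {x₀ : ℝ} (hx₀ : x₀ ∈ Icc a b)
    (hgx₀ : g x₀ = 0) : ∀ z ∈ Ioo a b, g z ≤ 0 := by
  intro z hz
  have hab : a ≤ b := hx₀.1.trans hx₀.2
  rcases lt_trichotomy z x₀ with hzx | rfl | hxz
  · refine hg.nonpos_of_mem_openSegment hx₀ (left_mem_Icc.2 hab) hgx₀ ?_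
    rw [openSegment_symm, openSegment_eq_Ioo (hz.1.trans hzx)]
    exact ⟨hz.1, hzx⟩
  · exact hgx₀.le
  · refine hg.nonpos_of_mem_openSegment hx₀ (right_mem_Icc.2 hab) hgx₀ ?_
    rw [openSegment_eq_Ioo (hxz.trans hz.2)]
    exact ⟨hxz, hz.2⟩

theorem le_div_rpow_mul (hg : IsAlphaLogConvexOn α s g) {x y t : ℝ} (hx : x ∈ s) (hy : y ∈ s)
    (hgx : 0 ≤ g x) (hgy : 0 < g y) (ht : t ∈ Icc (0 : ℝ) 1) :
    g (t * x + (1 - t) * y) ≤ (g x / g y) ^ (t ^ α) * g y :=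
  calc g (t * x + (1 - t) * y) ≤ g x ^ (t ^ α) * g y ^ (1 - t ^ α) := hg x hx y hy t ht
    _ = (g x / g y) ^ (t ^ α) * g y := by
      rw [div_rpow hgx hgy.le, rpow_sub hgy, rpow_one]
      field_simp

theorem le_mul_exp (hg : IsAlphaLogConvexOn α (Icc a b) g) (hα : α ≤ 1) (hab : a < b)
    (hga : 0 < g a) (hgab : g a ≤ g b) {x : ℝ} (hx : x ∈ Icc a b) :
    g x ≤ g b * exp (α * log (g a / g b) / (b - a) * (b - x)) := by
  have hgb : 0 < g b := hga.trans_le hgab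
  set t := (b - x) / (b - a) with ht_def
  have hba : 0 < b - a := sub_pos.2 hab
  have ht : t ∈ Icc (0 : ℝ) 1 :=
    ⟨div_nonneg (by linarith [hx.2]) hba.le, (div_le_one hba).2 (by linarith [hx.1])⟩
  have hx_eq : t * a + (1 - t) * b = x := by rw [ht_def]; field_simp; ring
  have hαt : α * t ≤ t ^ α :=
    (mul_le_of_le_one_left ht.1 hα).trans (self_le_rpow_of_le_one ht.1 ht.2 hα)
  have hη : 0 < g a / g b := div_pos hga hgb
  calc g x = g (t * a + (1 - t) * b) := by rw [hx_eq]
    _ ≤ (g a / g b) ^ (t ^ α) * g b :=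
      hg.le_div_rpow_mul (left_mem_Icc.2 hab.le) (right_mem_Icc.2 hab.le) hga.le hgb ht
    _ ≤ (g a / g b) ^ (α * t) * g b :=
      mul_le_mul_of_nonneg_right
        (rpow_le_rpow_of_exponent_ge hη ((div_le_one hgb).2 hgab) hαt) hgb.le
    _ = g b * exp (α * log (g a / g b) / (b - a) * (b - x)) := by
      rw [rpow_def_of_pos hη, ht_def]
      ring_nf

theorem eq_zero_on_Ioo_of_abs {f' : ℝ → ℝ} (hconv : IsAlphaLogConvexOn α (Icc a b) (|f' ·|))
    {x₀ : ℝ} (hx₀ : x₀ ∈ Icc a b) (h0 : f' x₀ = 0) : ∀ x ∈ Ioo a b, f' x = 0 :=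
  fun x hx => abs_nonpos_iff.1 (hconv.nonpos_on_Ioo hx₀ (by simp [h0]) x hx)

end IsAlphaLogConvexOn

theorem exp_le_one_add_mul_exp_half {u : ℝ} (hu : u ≤ 0) : exp u ≤ 1 + u * exp (u / 2) := by
  have hsinh : -(u / 2) ≤ sinh (-(u / 2)) := self_le_sinh_iff.2 (by linarith)
  rw [sinh_eq, neg_neg] at hsinh
  have hsq : exp u = exp (u / 2) * exp (u / 2) := by rw [← exp_add]; ring_nf
  have hinv : exp (-(u / 2)) * exp (u / 2) = 1 := by rw [← exp_add]; simp
  nlinarith [mul_le_mul_of_nonneg_right hsinh (exp_pos (u / 2)).le]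

theorem exp_half_sub_div_sq_le {u : ℝ} (hu : u < 0) :
    (exp (u / 2) - 1 - u / 2) / u ^ 2 ≤ (4 * exp u - 4 * u - 2 * u ^ 2 - 4) / (4 * u ^ 3) := by
  have hu3 : 4 * u ^ 3 < 0 := by nlinarith [pow_pos (neg_pos.2 hu) 3]
  rw [show (exp (u / 2) - 1 - u / 2) / u ^ 2 = 4 * u * (exp (u / 2) - 1 - u / 2) / (4 * u ^ 3) by
    field_simp]
  apply div_le_div_of_nonpos_of_le hu3.le
  nlinarith [exp_le_one_add_mul_exp_half hu.le]

theorem integral_sub_mul_exp_mul_sub {m b c : ℝ} (hc : c ≠ 0) :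
    ∫ x in m..b, (x - m) * exp (c * (b - x)) = (exp (c * (b - m)) - 1 - c * (b - m)) / c ^ 2 := by
  have hderiv : ∀ x, HasDerivAt (fun x => ((m - x) * c - 1) * exp (c * (b - x)) / c ^ 2)
      ((x - m) * exp (c * (b - x))) x := by
    intro x
    have hexp : HasDerivAt (fun x => exp (c * (b - x))) (exp (c * (b - x)) * (c * -1)) x :=
      (((hasDerivAt_id x).const_sub b).const_mul c).exp
    have hlin : HasDerivAt (fun x => (m - x) * c - 1) (-1 * c) x :=
      (((hasDerivAt_id' x).const_sub m).mul_const c).sub_const 1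
    refine ((hlin.fun_mul hexp).div_const (c ^ 2)).congr_deriv ?_
    field_simp
    ring
  rw [integral_eq_sub_of_hasDerivAt (fun x _ => hderiv x)
    ((by fun_prop : Continuous _).intervalIntegrable _ _)]
  simp only [sub_self, mul_zero, exp_zero]
  field_simp
  ring

noncomputable def trapezoidError (f : ℝ → ℝ) (a b : ℝ) : ℝ :=
  (f a + f b) / 2 - (1 / (b - a)) * ∫ x in a..b, f x

theorem trapezoidError_eq_integral {f f' : ℝ → ℝ} {a b : ℝ} (hab : a ≠ b)
    (hf : ∀ x ∈ uIcc a b, HasDerivAt f (f' x) x) (hf' : IntervalIntegrable f' volume a b) :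
    trapezoidError f a b = (∫ x in a..b, (x - (a + b) / 2) * f' x) / (b - a) := by
  have hparts := integral_mul_deriv_eq_deriv_mul (u' := fun _ => 1)
    (fun x _ => (hasDerivAt_id' x).sub_const ((a + b) / 2)) hf intervalIntegrable_const hf'
  simp only [one_mul] at hparts
  have hba : b - a ≠ 0 := sub_ne_zero.2 hab.symm
  rw [trapezoidError, hparts]
  field_simp
  ring

theorem trapezoidError_eq_zero {f f' : ℝ → ℝ} {a b : ℝ} (hab : a < b)
    (hf : ∀ x ∈ Icc a b, HasDerivAt f (f' x) x) (hf' : IntervalIntegrable f' volume a b)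
    (hzero : ∀ x ∈ Ioo a b, f' x = 0) : trapezoidError f a b = 0 := by
  rw [trapezoidError_eq_integral hab.ne (by rwa [uIcc_of_le hab.le]) hf', integral_of_le hab.le,
    integral_Ioc_eq_integral_Ioo, setIntegral_eq_zero_of_forall_eq_zero (fun x hx => by
      simp [hzero x hx]), zero_div]

theorem integral_midpoint_sub_mul_le {G : ℝ → ℝ} {a b : ℝ} (hab : a ≤ b)
    (hG : MonotoneOn G (Icc a b)) :
    ∫ x in a..(a + b) / 2, ((a + b) / 2 - x) * G x ≤
      ∫ x in (a + b) / 2..b, (x - (a + b) / 2) * G x := by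
  set m := (a + b) / 2 with hm
  have ham : a ≤ m := by linarith
  have hmb : m ≤ b := by linarith
  have hGi : IntervalIntegrable G volume a b := by
    apply MonotoneOn.intervalIntegrable
    rwa [uIcc_of_le hab]
  have hright : IntervalIntegrable (fun x => (x - m) * G x) volume m b :=
    (hGi.mono_set (uIcc_subset_uIcc_right (by rw [uIcc_of_le hab]; exact ⟨ham, hmb⟩)))
      |>.continuousOn_mul (by fun_prop)
  have hreflect : ∫ x in m..b, (x - m) * G (a + b - x) = ∫ x in a..m, (m - x) * G x := by
    have h := integral_comp_sub_left (fun x => (m - x) * G x) (a + b) (a := m) (b := b)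
    rw [show a + b - b = a by ring, show a + b - m = m by rw [hm]; ring] at h
    refine (integral_congr fun x _ => ?_).trans h
    congr 1
    rw [hm]; ring
  have hGreflect : IntervalIntegrable (fun x => G (a + b - x)) volume m b := by
    apply AntitoneOn.intervalIntegrable
    rw [uIcc_of_le hmb]
    intro x hx y hy hxy
    exact hG ⟨by linarith [hy.2], by linarith [hy.1]⟩ ⟨by linarith [hx.2], by linarith [hx.1]⟩
      (by linarith)
  rw [← hreflect]
  refine integral_mono_on hmb (hGreflect.continuousOn_mul (by fun_prop)) hright fun x hx => ?_
  exact mul_le_mul_of_nonneg_left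
    (hG ⟨by linarith [hx.2], by linarith [hx.1]⟩ ⟨ham.trans hx.1, hx.2⟩ (by linarith [hx.1]))
    (by linarith [hx.1])

theorem abs_integral_sub_midpoint_mul_le_of_nonneg {g G : ℝ → ℝ} {a b : ℝ} (hab : a ≤ b)
    (hg : IntervalIntegrable g volume a b) (hG : MonotoneOn G (Icc a b))
    (hg0 : ∀ x ∈ Ioo a b, 0 ≤ g x) (hgG : ∀ x ∈ Ioo a b, g x ≤ G x) :
    |∫ x in a..b, (x - (a + b) / 2) * g x| ≤ ∫ x in (a + b) / 2..b, (x - (a + b) / 2) * G x := by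
  set m := (a + b) / 2 with hm
  have hm_mem : m ∈ uIcc a b := by rw [uIcc_of_le hab]; constructor <;> linarith
  have ham : a ≤ m := by linarith
  have hmb : m ≤ b := by linarith
  have hGi : IntervalIntegrable G volume a b := by
    apply MonotoneOn.intervalIntegrable
    rwa [uIcc_of_le hab]
  have hgl := hg.mono_set (uIcc_subset_uIcc_left hm_mem)
  have hgr := hg.mono_set (uIcc_subset_uIcc_right hm_mem)
  have hGl := hGi.mono_set (uIcc_subset_uIcc_left hm_mem)
  have hGr := hGi.mono_set (uIcc_subset_uIcc_right hm_mem)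
  set L := ∫ x in a..m, (m - x) * g x
  set R := ∫ x in m..b, (x - m) * g x
  have hsplit : ∫ x in a..b, (x - m) * g x = R - L := by
    rw [← integral_add_adjacent_intervals (hgl.continuousOn_mul (by fun_prop))
      (hgr.continuousOn_mul (by fun_prop))]
    have hleft : ∫ x in a..m, (x - m) * g x = -L := by
      rw [← intervalIntegral.integral_neg]
      congr 1; ext x; ring
    rw [hleft]
    ring
  have hL0 : 0 ≤ L := by
    simpa using integral_mono_on_of_le_Ioo ham intervalIntegrable_const
      (hgl.continuousOn_mul (by fun_prop)) fun x hx =>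
        mul_nonneg (by linarith [hx.2]) (hg0 x ⟨hx.1, hx.2.trans_le hmb⟩)
  have hR0 : 0 ≤ R := by
    simpa using integral_mono_on_of_le_Ioo hmb intervalIntegrable_const
      (hgr.continuousOn_mul (by fun_prop)) fun x hx =>
        mul_nonneg (by linarith [hx.1]) (hg0 x ⟨ham.trans_lt hx.1, hx.2⟩)
  have hLG : L ≤ ∫ x in a..m, (m - x) * G x :=
    integral_mono_on_of_le_Ioo ham (hgl.continuousOn_mul (by fun_prop))
      (hGl.continuousOn_mul (by fun_prop)) fun x hx =>
        mul_le_mul_of_nonneg_left (hgG x ⟨hx.1, hx.2.trans_le hmb⟩) (by linarith [hx.2])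
  have hRG : R ≤ ∫ x in m..b, (x - m) * G x :=
    integral_mono_on_of_le_Ioo hmb (hgr.continuousOn_mul (by fun_prop))
      (hGr.continuousOn_mul (by fun_prop)) fun x hx =>
        mul_le_mul_of_nonneg_left (hgG x ⟨ham.trans_lt hx.1, hx.2⟩) (by linarith [hx.1])
  have hLR := integral_midpoint_sub_mul_le hab hG
  rw [hsplit, abs_le]
  constructor <;> linarith

theorem abs_integral_sub_midpoint_mul_le {g G : ℝ → ℝ} {a b : ℝ} (hab : a ≤ b)
    (hg : IntervalIntegrable g volume a b) (hG : MonotoneOn G (Icc a b))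
    (hgG : ∀ x ∈ Ioo a b, |g x| ≤ G x)
    (hsign : (∀ x ∈ Ioo a b, 0 ≤ g x) ∨ (∀ x ∈ Ioo a b, g x ≤ 0)) :
    |∫ x in a..b, (x - (a + b) / 2) * g x| ≤ ∫ x in (a + b) / 2..b, (x - (a + b) / 2) * G x := by
  rcases hsign with hg0 | hg0
  · exact abs_integral_sub_midpoint_mul_le_of_nonneg hab hg hG hg0
      fun x hx => (le_abs_self _).trans (hgG x hx)
  · simpa [intervalIntegral.integral_neg] using
      abs_integral_sub_midpoint_mul_le_of_nonneg hab hg.neg hG (fun x hx => neg_nonneg.2 (hg0 x hx))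
        fun x hx => (neg_le_abs _).trans (hgG x hx)

theorem nonneg_or_nonpos_of_isAlphaLogConvexOn_abs {f f' : ℝ → ℝ} {a b α : ℝ}
    (hf : ∀ x ∈ Icc a b, HasDerivAt f (f' x) x)
    (hconv : IsAlphaLogConvexOn α (Icc a b) (|f' ·|)) :
    (∀ x ∈ Ioo a b, 0 ≤ f' x) ∨ (∀ x ∈ Ioo a b, f' x ≤ 0) := by
  by_cases hzero : ∃ x₀ ∈ Icc a b, f' x₀ = 0
  · obtain ⟨x₀, hx₀, h0⟩ := hzero
    exact Or.inl fun x hx => (hconv.eq_zero_on_Ioo_of_abs hx₀ h0 x hx).ge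
  · push Not at hzero
    rcases hasDerivWithinAt_forall_lt_or_forall_gt_of_forall_ne (convex_Icc a b)
      (fun x hx => (hf x hx).hasDerivWithinAt) hzero with hneg | hpos
    · exact Or.inr fun x hx => (hneg x (Ioo_subset_Icc_self hx)).le
    · exact Or.inl fun x hx => (hpos x (Ioo_subset_Icc_self hx)).le

section TrapezoidBounds

variable {f f' : ℝ → ℝ} {a b α : ℝ}

theorem abs_trapezoidError_le_integral_exp (hab : a < b) (hα₀ : 0 ≤ α) (hα₁ : α ≤ 1)
    (hf : ∀ x ∈ Icc a b, HasDerivAt f (f' x) x) (hf' : IntervalIntegrable f' volume a b)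
    (hconv : IsAlphaLogConvexOn α (Icc a b) (|f' ·|)) (hfa : f' a ≠ 0) (hfab : |f' a| ≤ |f' b|) :
    |trapezoidError f a b| ≤ (∫ x in (a + b) / 2..b, (x - (a + b) / 2) *
      (|f' b| * exp (α * log (|f' a| / |f' b|) / (b - a) * (b - x)))) / (b - a) := by
  have hba : 0 < b - a := sub_pos.2 hab
  have hfb : 0 < |f' b| := (abs_pos.2 hfa).trans_le hfab
  have hc : α * log (|f' a| / |f' b|) / (b - a) ≤ 0 :=
    div_nonpos_of_nonpos_of_nonneg (mul_nonpos_of_nonneg_of_nonpos hα₀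
      (log_nonpos (by positivity) ((div_le_one hfb).2 hfab))) hba.le
  rw [trapezoidError_eq_integral hab.ne (by rwa [uIcc_of_le hab.le]) hf', abs_div,
    abs_of_pos hba]
  refine div_le_div_of_nonneg_right (abs_integral_sub_midpoint_mul_le hab.le hf' ?_ ?_
    (nonneg_or_nonpos_of_isAlphaLogConvexOn_abs hf hconv)) hba.le
  · intro x _ y _ hxy
    exact mul_le_mul_of_nonneg_left (exp_le_exp.2 (by nlinarith)) hfb.le
  · exact fun x hx => hconv.le_mul_exp hα₁ hab (abs_pos.2 hfa) hfab (Ioo_subset_Icc_self hx)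

theorem abs_trapezoidError_le_of_abs_deriv_eq (hab : a < b) (hα₀ : 0 ≤ α) (hα₁ : α ≤ 1)
    (hf : ∀ x ∈ Icc a b, HasDerivAt f (f' x) x) (hf' : IntervalIntegrable f' volume a b)
    (hconv : IsAlphaLogConvexOn α (Icc a b) (|f' ·|)) (hfa : f' a ≠ 0) (hfab : |f' a| = |f' b|) :
    |trapezoidError f a b| ≤ (b - a) / 8 * |f' b| := by
  have h := abs_trapezoidError_le_integral_exp hab hα₀ hα₁ hf hf' hconv hfa hfab.le
  rw [hfab, div_self (hfab ▸ abs_pos.2 hfa).ne'] at h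
  have hba : b - a ≠ 0 := (sub_pos.2 hab).ne'
  refine h.trans_eq ?_
  simp only [log_one, mul_zero, zero_div, zero_mul, exp_zero, mul_one]
  rw [intervalIntegral.integral_mul_const,
    intervalIntegral.integral_comp_sub_right (fun x => x), integral_id]
  field_simp
  ring

theorem abs_trapezoidError_le_of_abs_deriv_lt (hab : a < b) (hα₀ : 0 < α) (hα₁ : α ≤ 1)
    (hf : ∀ x ∈ Icc a b, HasDerivAt f (f' x) x) (hf' : IntervalIntegrable f' volume a b)
    (hconv : IsAlphaLogConvexOn α (Icc a b) (|f' ·|)) (hfa : f' a ≠ 0) (hfab : |f' a| < |f' b|) :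
    |trapezoidError f a b| ≤ (b - a) * |f' b| *
      ((4 * exp (α * log (|f' a| / |f' b|)) - 4 * (α * log (|f' a| / |f' b|))
        - 2 * (α * log (|f' a| / |f' b|)) ^ 2 - 4) / (4 * (α * log (|f' a| / |f' b|)) ^ 3)) := by
  have h := abs_trapezoidError_le_integral_exp hab hα₀.le hα₁ hf hf' hconv hfa hfab.le
  have hfb : 0 < |f' b| := (abs_pos.2 hfa).trans hfab
  set u := α * log (|f' a| / |f' b|)
  have hu : u < 0 := mul_neg_of_pos_of_neg hα₀
    (log_neg (by positivity) ((div_lt_one hfb).2 hfab))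
  have hba : b - a ≠ 0 := (sub_pos.2 hab).ne'
  have hmid : u / (b - a) * (b - (a + b) / 2) = u / 2 := by field_simp; ring
  have hintegral :
      ∫ x in (a + b) / 2..b, (x - (a + b) / 2) * (|f' b| * exp (u / (b - a) * (b - x)))
        = |f' b| * ((exp (u / 2) - 1 - u / 2) / (u / (b - a)) ^ 2) := by
    simp_rw [mul_left_comm _ (|f' b|)]
    rw [intervalIntegral.integral_const_mul, integral_sub_mul_exp_mul_sub (div_ne_zero hu.ne hba),
      hmid]
  calc |trapezoidError f a b| ≤ _ := h
    _ = (b - a) * |f' b| * ((exp (u / 2) - 1 - u / 2) / u ^ 2) := by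
      rw [hintegral]
      field_simp
    _ ≤ _ := mul_le_mul_of_nonneg_left (exp_half_sub_div_sq_le hu)
      (mul_nonneg (sub_pos.2 hab).le hfb.le)

end TrapezoidBounds

theorem stmt3_general
    (I : Set ℝ)
    (hIci : Set.Ici (0:ℝ) ⊆ I)
    (f f' : ℝ → ℝ)
    (hderiv : ∀ x ∈ I, HasDerivAt f (f' x) x)
    (a b : ℝ) (ha : 0 ≤ a) (hab : a < b)
    (hint : IntervalIntegrable f' MeasureTheory.volume a b)
    (α : ℝ) (hα : α ∈ Set.Ioc (0:ℝ) 1)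
    (hconv : ∀ x ∈ Set.Icc (0:ℝ) (b), ∀ y ∈ Set.Icc (0:ℝ) (b), ∀ t ∈ Set.Icc (0:ℝ) 1,
      |f' (t * x + (1 - t) * y)| ≤ |f' (x)| ^ (t ^ α) * |f' (y)| ^ (1 - t ^ α))
    (η : ℝ) (hη : η = |f' a| / |f' b|) :
    (η = 1 → |(f a + f b) / 2 - (1 / (b - a)) * ∫ x in a..b, f x| ≤ (b - a) / 3 * |f' b|) ∧
    (η < 1 → |(f a + f b) / 2 - (1 / (b - a)) * ∫ x in a..b, f x| ≤ (b - a) / 2 * |f' b| *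
      ((4 * η ^ α - 4 * α * Real.log η - 2 * α ^ 2 * Real.log η ^ 2 - 4) /
        (2 * α ^ 3 * Real.log η ^ 3))) := by
  have hf : ∀ x ∈ Icc a b, HasDerivAt f (f' x) x := fun x hx => hderiv x (hIci (ha.trans hx.1))
  have hconv' : IsAlphaLogConvexOn α (Icc a b) (|f' ·|) :=
    IsAlphaLogConvexOn.mono (g := (|f' ·|)) hconv (Icc_subset_Icc_left ha)
  have hfa : 0 < η → f' a ≠ 0 := fun hη0 h => by
    rw [h, abs_zero, zero_div] at hη
    linarith
  have hfb : 0 < η → 0 < |f' b| := fun hη0 => abs_pos.2 fun h => by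
    rw [h, abs_zero, div_zero] at hη
    linarith
  change (η = 1 → |trapezoidError f a b| ≤ _) ∧ (η < 1 → |trapezoidError f a b| ≤ _)
  refine ⟨fun hη1 => ?_, fun hη1 => ?_⟩
  · calc |trapezoidError f a b| ≤ (b - a) / 8 * |f' b| :=
          abs_trapezoidError_le_of_abs_deriv_eq hab hα.1.le hα.2 hf hint hconv'
            (hfa (by simp [hη1])) (eq_of_div_eq_one (hη ▸ hη1))
      _ ≤ (b - a) / 3 * |f' b| := by gcongr; linarith
  · rcases (show 0 ≤ η by rw [hη]; positivity).eq_or_lt with hη0 | hη0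
    · -- For `η = 0` the bound is `0`, as `log 0 = 0` puts a zero in the denominator.
      obtain ⟨x₀, hx₀, h0⟩ : ∃ x₀ ∈ Icc a b, f' x₀ = 0 := by
        rcases (div_eq_zero_iff.1 (hη ▸ hη0.symm)) with h | h
        · exact ⟨a, left_mem_Icc.2 hab.le, abs_eq_zero.1 h⟩
        · exact ⟨b, right_mem_Icc.2 hab.le, abs_eq_zero.1 h⟩
      rw [trapezoidError_eq_zero hab hf hint (hconv'.eq_zero_on_Ioo_of_abs hx₀ h0), ← hη0]
      simp
    · have := abs_trapezoidError_le_of_abs_deriv_lt hab hα.1 hα.2 hf hint hconv' (hfa hη0)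
        ((div_lt_one (hfb hη0)).1 (hη ▸ hη1))
      rw [← hη] at this
      convert this using 1
      rw [rpow_def_of_pos hη0, mul_comm (log η) α]
      ring

theorem stmt3
    (I : Set ℝ) (hIopen : IsOpen I) (hIconn : Set.OrdConnected I)
    (hIci : Set.Ici (0:ℝ) ⊆ I)
    (f f' : ℝ → ℝ)
    (hfpos : ∀ x ∈ I, 0 < f x)
    (hderiv : ∀ x ∈ I, HasDerivAt f (f' x) x)
    (a b : ℝ) (ha : 0 ≤ a) (hab : a < b)
    (hint : IntervalIntegrable f' MeasureTheory.volume a b)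
    (α : ℝ) (hα : α ∈ Set.Ioc (0:ℝ) 1)
    (hconv : ∀ x ∈ Set.Icc (0:ℝ) (b), ∀ y ∈ Set.Icc (0:ℝ) (b), ∀ t ∈ Set.Icc (0:ℝ) 1,
      |f' (t * x + (1 - t) * y)| ≤ |f' (x)| ^ (t ^ α) * |f' (y)| ^ (1 - t ^ α))
    (η : ℝ) (hη : η = |f' a| / |f' b|) :
    (η = 1 → |(f a + f b) / 2 - (1 / (b - a)) * ∫ x in a..b, f x| ≤ (b - a) / 3 * |f' b|) ∧
    (η < 1 → |(f a + f b) / 2 - (1 / (b - a)) * ∫ x in a..b, f x| ≤ (b - a) / 2 * |f' b| *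
      ((4 * η ^ α - 4 * α * Real.log η - 2 * α ^ 2 * Real.log η ^ 2 - 4) /
        (2 * α ^ 3 * Real.log η ^ 3))) :=
  stmt3_general I hIci f f' hderiv a b ha hab hint α hα hconv η hη
end

section
/- Let I ⊃ [0,∞) be an open interval and let f : I → (0,∞) be differentiable on I with f' integrable on (a,b), where 0 ≤ a < b < ∞. Suppose |f'|^q is (α,m)-logarithmically convex on [0, b/m] for some (α,m) ∈ (0,1]×(0,1] and p, q > 1 with 1/p + 1/q = 1, and set η = |f'(a)| / |f'(b/m)|^m. Then: if η = 1, |(f(a)+f(b))/2 − (1/(b−a))·∫_a^b f(x) dx| ≤ (b−a)·|f'(b/m)|^m·(2/((p+1)(p+2)))^{1/p}; and if η < 1, |(f(a)+f(b))/2 − (1/(b−a))·∫_a^b f(x) dx| ≤ (b−a)·|f'(b/m)|^m·(2/((p+1)(p+2)))^{1/p}·((η^{αq} − 1)/(αq·ln η))^{1/q}. -/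
/-!
Integration by parts turns the trapezoid error into `(1/(b-a)) ∫ (x - (a+b)/2) f'(x) dx`, and
Hölder's inequality bounds it by `((b-a) 2⁻ᵖ/(p+1))^(1/p) (∫ |f'|^q)^(1/q)`, where
Bernoulli's inequality `2^(p+1) ≥ p + 2` gives `2⁻ᵖ/(p+1) ≤ 2/((p+1)(p+2))`.
Writing `x = t a + m (1-t) (b/m)` with `t = (b-x)/(b-a)`, log-convexity gives
`|f'(x)|^q ≤ |f'(b/m)|^(mq) η^(q t^α)`, and since `α t ≤ t^α` this is at most
`|f'(b/m)|^(mq) (η^(αq))^t`, whose integral produces `(η^(αq) - 1)/(αq log η)`.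
For `η = 0` the right-hand side is `0` (`log 0 = 0` in Lean); then `f'(a) = 0` or `f'(b/m) = 0`,
and log-convexity forces `f' = 0` on `(a, b)`.
-/

open MeasureTheory Real Set intervalIntegral

section Trapezoid

variable {f f' : ℝ → ℝ} {a b p q : ℝ}

theorem trapezoid_sub_average_eq_integral (hab : a ≠ b)
    (hderiv : ∀ x ∈ uIcc a b, HasDerivAt f (f' x) x) (hint : IntervalIntegrable f' volume a b) :
    (f a + f b) / 2 - (1 / (b - a)) * ∫ x in a..b, f x =
      (1 / (b - a)) * ∫ x in a..b, (x - (a + b) / 2) * f' x := by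
  have hparts := integral_mul_deriv_eq_deriv_mul (u := fun x => x - (a + b) / 2)
    (fun x _ => (hasDerivAt_id x).sub_const _) hderiv intervalIntegrable_const hint
  simp only [hparts, one_mul]
  have : b - a ≠ 0 := sub_ne_zero.2 hab.symm
  field_simp
  ring

theorem integral_abs_sub_midpoint_rpow (hab : a ≤ b) (hp : 0 ≤ p) :
    ∫ x in a..b, |x - (a + b) / 2| ^ p = 2 * ((b - a) / 2) ^ (p + 1) / (p + 1) := by
  set c := (a + b) / 2
  have hcont : Continuous fun x : ℝ => |x - c| ^ p := by fun_prop (disch := exact Or.inr hp)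
  have half : ∫ y in (0:ℝ)..(b - a) / 2, |y| ^ p = ((b - a) / 2) ^ (p + 1) / (p + 1) := by
    have hba : 0 ≤ (b - a) / 2 := by linarith
    rw [integral_congr (g := fun y => y ^ p) fun y hy => by
      rw [abs_of_nonneg (uIcc_of_le hba ▸ hy).1], integral_rpow (Or.inl (by linarith)),
      zero_rpow (by linarith)]
    ring
  rw [← integral_add_adjacent_intervals (b := c) (hcont.intervalIntegrable _ _)
    (hcont.intervalIntegrable _ _)]
  have left : ∫ x in a..c, |x - c| ^ p = ∫ x in a..c, |c - x| ^ p := by simp_rw [abs_sub_comm]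
  rw [left, integral_comp_sub_left (fun y => |y| ^ p), integral_comp_sub_right (fun y => |y| ^ p),
    sub_self, show c - a = (b - a) / 2 by ring, show b - c = (b - a) / 2 by ring, half]
  ring

theorem abs_trapezoid_sub_average_le_holder (hab : a < b)
    (hderiv : ∀ x ∈ Icc a b, HasDerivAt f (f' x) x) (hint : IntervalIntegrable f' volume a b)
    (hpq : p.HolderConjugate q) (hfq : IntegrableOn (fun x => |f' x| ^ q) (Ioc a b)) :
    |(f a + f b) / 2 - (1 / (b - a)) * ∫ x in a..b, f x| ≤
      (2 * ((b - a) / 2) ^ (p + 1) / (p + 1)) ^ (1 / p) * (∫ x in a..b, |f' x| ^ q) ^ (1 / q) /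
        (b - a) := by
  set c := (a + b) / 2
  have hL : 0 < b - a := sub_pos.2 hab
  rw [trapezoid_sub_average_eq_integral hab.ne (uIcc_of_le hab.le ▸ hderiv) hint, abs_mul,
    abs_of_pos (one_div_pos.2 hL), one_div_mul_eq_div]
  gcongr
  have hfLp : MemLp (fun x : ℝ => |x - c|) (ENNReal.ofReal p) (volume.restrict (Ioc a b)) := by
    refine MemLp.of_bound (by fun_prop) (b - a) ((ae_restrict_iff' measurableSet_Ioc).2
      (.of_forall fun x hx => ?_))
    rw [norm_abs_eq_norm, Real.norm_eq_abs, abs_le]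
    constructor <;> linarith [hx.1, hx.2, show c = (a + b) / 2 from rfl]
  have hgLp : MemLp (fun x => |f' x|) (ENNReal.ofReal q) (volume.restrict (Ioc a b)) := by
    refine (integrable_norm_rpow_iff hint.1.aestronglyMeasurable.norm
      (by simpa using hpq.symm.pos) (by simp)).1 ?_
    simpa only [norm_abs_eq_norm, Real.norm_eq_abs, ENNReal.toReal_ofReal hpq.symm.nonneg]
      using hfq.integrable
  calc |∫ x in a..b, (x - c) * f' x|
      ≤ ∫ x in a..b, |x - c| * |f' x| := by
        simpa only [abs_mul] using
          abs_integral_le_integral_abs (f := fun x => (x - c) * f' x) hab.le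
    _ ≤ (∫ x in a..b, |x - c| ^ p) ^ (1 / p) * (∫ x in a..b, |f' x| ^ q) ^ (1 / q) := by
        simp only [integral_of_le hab.le]
        exact integral_mul_le_Lp_mul_Lq_of_nonneg hpq (.of_forall fun _ => abs_nonneg _)
          (.of_forall fun _ => abs_nonneg _) hfLp hgLp
    _ = _ := by rw [integral_abs_sub_midpoint_rpow hab.le hpq.nonneg]

theorem two_mul_half_rpow_div_le {L p : ℝ} (hL : 0 ≤ L) (hp : 1 ≤ p) :
    2 * (L / 2) ^ (p + 1) / (p + 1) ≤ L ^ (p + 1) * (2 / ((p + 1) * (p + 2))) := by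
  have bernoulli : 1 + p * 1 ≤ (1 + 1 : ℝ) ^ p :=
    one_add_mul_self_le_rpow_one_add (by norm_num) hp
  norm_num at bernoulli
  have h2p : (0 : ℝ) < 2 ^ p := by positivity
  calc 2 * (L / 2) ^ (p + 1) / (p + 1) = L ^ (p + 1) * (1 / (2 ^ p * (p + 1))) := by
        rw [div_rpow hL zero_le_two, rpow_add_one two_ne_zero]
        field_simp
    _ ≤ L ^ (p + 1) * (2 / ((p + 1) * (p + 2))) := by
        refine mul_le_mul_of_nonneg_left ?_ (by positivity)
        rw [div_le_div_iff₀ (by positivity) (by positivity)]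
        nlinarith

theorem integrableOn_abs_rpow_of_ae_le (hint : IntervalIntegrable f' volume a b) (hq : 0 ≤ q)
    {h : ℝ → ℝ} (hh : IntegrableOn h (Ioc a b))
    (hfh : ∀ᵐ x ∂volume.restrict (Ioc a b), |f' x| ^ q ≤ h x) :
    IntegrableOn (fun x => |f' x| ^ q) (Ioc a b) := by
  refine hh.mono' ((continuous_abs.rpow_const fun _ => Or.inr hq).comp_aestronglyMeasurable
    hint.1.aestronglyMeasurable) ?_
  filter_upwards [hfh] with x hx
  rwa [Real.norm_of_nonneg (by positivity)]

theorem abs_trapezoid_sub_average_le (hab : a < b)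
    (hderiv : ∀ x ∈ Icc a b, HasDerivAt f (f' x) x) (hint : IntervalIntegrable f' volume a b)
    (hpq : p.HolderConjugate q) {M : ℝ} (hM : 0 ≤ M) (w : ℝ → ℝ) (S : ℝ) (hS : 0 ≤ S)
    (hw : IntervalIntegrable w volume a b) (hwS : ∫ x in a..b, w x ≤ (b - a) * S)
    (hfw : ∀ x ∈ Ioo a b, |f' x| ^ q ≤ M ^ q * w x) :
    |(f a + f b) / 2 - (1 / (b - a)) * ∫ x in a..b, f x| ≤
      (b - a) * M * (2 / ((p + 1) * (p + 2))) ^ (1 / p) * S ^ (1 / q) := by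
  have hL : 0 < b - a := sub_pos.2 hab
  have hfw_ae : ∀ᵐ x ∂volume.restrict (Ioc a b), |f' x| ^ q ≤ M ^ q * w x :=
    ae_restrict_of_ae_eq_of_ae_restrict Ioo_ae_eq_Ioc
      (ae_restrict_of_forall_mem measurableSet_Ioo hfw)
  have hfq := integrableOn_abs_rpow_of_ae_le hint hpq.symm.nonneg (hw.1.const_mul _) hfw_ae
  have hfq_le : ∫ x in a..b, |f' x| ^ q ≤ M ^ q * ((b - a) * S) := by
    rw [integral_of_le hab.le]
    calc ∫ x in Ioc a b, |f' x| ^ q ≤ ∫ x in Ioc a b, M ^ q * w x :=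
          integral_mono_ae hfq (hw.1.const_mul _) hfw_ae
      _ ≤ M ^ q * ((b - a) * S) := by
          rw [MeasureTheory.integral_const_mul, ← integral_of_le hab.le]
          exact mul_le_mul_of_nonneg_left hwS (by positivity)
  set C := 2 / ((p + 1) * (p + 2))
  have hp := hpq.pos
  have hq := hpq.symm.pos
  calc _ ≤ (2 * ((b - a) / 2) ^ (p + 1) / (p + 1)) ^ (1 / p) *
        (∫ x in a..b, |f' x| ^ q) ^ (1 / q) / (b - a) :=
        abs_trapezoid_sub_average_le_holder hab hderiv hint hpq hfq
    _ ≤ ((b - a) ^ (p + 1) * C) ^ (1 / p) * (M ^ q * ((b - a) * S)) ^ (1 / q) / (b - a) := by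
        have : 0 ≤ ∫ x in a..b, |f' x| ^ q := integral_nonneg hab.le fun _ _ => by positivity
        gcongr
        exact two_mul_half_rpow_div_le hL.le hpq.lt.le
    _ = (b - a) * M * C ^ (1 / p) * S ^ (1 / q) := by
        rw [mul_rpow (by positivity) (by positivity), mul_rpow (by positivity) (by positivity),
          mul_rpow hL.le hS, ← rpow_mul hL.le, ← rpow_mul hM, mul_one_div_cancel hq.ne', rpow_one]
        have hsum : (p + 1) * (1 / p) + 1 / q = 2 := by
          have := hpq.inv_add_inv_eq_inv
          field_simp at this ⊢
          linarith
        have hL2 : (b - a) ^ ((p + 1) * (1 / p)) * (b - a) ^ (1 / q) = (b - a) * (b - a) := by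
          rw [← rpow_add hL, hsum, rpow_two, sq]
        rw [div_eq_iff hL.ne']
        linear_combination M * C ^ (1 / p) * S ^ (1 / q) * hL2

end Trapezoid

theorem sub_div_sub_mem_Icc {a b x : ℝ} (hab : a < b) (hx : x ∈ Icc a b) :
    (b - x) / (b - a) ∈ Icc (0 : ℝ) 1 :=
  ⟨div_nonneg (by linarith [hx.2]) (by linarith), (div_le_one (by linarith)).2 (by linarith [hx.1])⟩

theorem rpow_rpow_rpow_le_of_le_one {η q t α : ℝ} (hη0 : 0 < η) (hη1 : η ≤ 1) (hq : 0 ≤ q)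
    (ht : t ∈ Icc (0 : ℝ) 1) (hα1 : α ≤ 1) : (η ^ q) ^ (t ^ α) ≤ (η ^ (α * q)) ^ t := by
  rw [← rpow_mul hη0.le, ← rpow_mul hη0.le]
  refine rpow_le_rpow_of_exponent_ge hη0 hη1 ?_
  calc α * q * t = q * (α * t) := by ring
    _ ≤ q * t ^ α := mul_le_mul_of_nonneg_left
        ((mul_le_of_le_one_left ht.1 hα1).trans (self_le_rpow_of_le_one ht.1 ht.2 hα1)) hq

theorem integral_rpow_sub_div {a b c : ℝ} (hab : a ≠ b) (hc0 : 0 < c) (hc1 : c ≠ 1) :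
    ∫ x in a..b, c ^ ((b - x) / (b - a)) = (b - a) * ((c - 1) / log c) := by
  have hL : b - a ≠ 0 := sub_ne_zero.2 hab.symm
  have hlog : log c ≠ 0 := log_ne_zero_of_pos_of_ne_one hc0 hc1
  have hF : ∀ x ∈ uIcc a b, HasDerivAt (fun y => -((b - a) / log c) * c ^ ((b - y) / (b - a)))
      (c ^ ((b - x) / (b - a))) x := fun x _ => by
    refine ((((hasDerivAt_id' x).const_sub b).div_const (b - a)).const_rpow hc0
      |>.const_mul (-((b - a) / log c))).congr_deriv ?_
    field_simp
  have hint : IntervalIntegrable (fun x => c ^ ((b - x) / (b - a))) volume a b := by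
    apply Continuous.intervalIntegrable
    fun_prop (disch := exact hc0.ne')
  rw [integral_eq_sub_of_hasDerivAt hF hint]
  simp only [sub_self, zero_div, rpow_zero, div_self hL, rpow_one]
  field_simp
  ring

def AlphaMLogConvexOn (α m : ℝ) (s : Set ℝ) (g : ℝ → ℝ) : Prop :=
  ∀ x ∈ s, ∀ y ∈ s, ∀ t ∈ Icc (0 : ℝ) 1,
    g (t * x + m * (1 - t) * y) ≤ g x ^ (t ^ α) * g y ^ (m * (1 - t ^ α))

namespace AlphaMLogConvexOn

variable {α m a b x : ℝ} {g : ℝ → ℝ}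

theorem le_of_mem_Icc (hg : AlphaMLogConvexOn α m (Icc 0 (b / m)) g) (ha : 0 ≤ a) (hab : a < b)
    (hm : 0 < m) (hm1 : m ≤ 1) (hx : x ∈ Icc a b) :
    g x ≤ g a ^ (((b - x) / (b - a)) ^ α) * g (b / m) ^ (m * (1 - ((b - x) / (b - a)) ^ α)) := by
  have hb : b ≤ b / m := le_div_self (ha.trans hab.le) hm hm1
  have hx_eq : (b - x) / (b - a) * a + m * (1 - (b - x) / (b - a)) * (b / m) = x := by
    have : b - a ≠ 0 := by linarith
    field_simp
    ring
  simpa only [hx_eq] using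
    hg a ⟨ha, by linarith⟩ (b / m) ⟨by linarith, le_rfl⟩ _ (sub_div_sub_mem_Icc hab hx)

theorem le_mul_rpow (hg : AlphaMLogConvexOn α m (Icc 0 (b / m)) g) (ha : 0 ≤ a) (hab : a < b)
    (hm : 0 < m) (hm1 : m ≤ 1) {θ : ℝ} (hθ : 0 ≤ θ) (hgb : 0 ≤ g (b / m))
    (hga : g a = θ * g (b / m) ^ m) (hx : x ∈ Icc a b) :
    g x ≤ g (b / m) ^ m * θ ^ (((b - x) / (b - a)) ^ α) := by
  refine (hg.le_of_mem_Icc ha hab hm hm1 hx).trans_eq ?_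
  set s := ((b - x) / (b - a)) ^ α
  have hG : 0 ≤ g (b / m) ^ m := rpow_nonneg hgb m
  have hcollapse : (g (b / m) ^ m) ^ s * (g (b / m) ^ m) ^ (1 - s) = g (b / m) ^ m := by
    rw [← rpow_add' hG (by simp), add_sub_cancel, rpow_one]
  rw [hga, mul_rpow hθ hG, rpow_mul hgb]
  linear_combination θ ^ s * hcollapse

theorem nonpos_of_eq_zero (hg : AlphaMLogConvexOn α m (Icc 0 (b / m)) g) (ha : 0 ≤ a)
    (hab : a < b) (hα : 0 < α) (hm : 0 < m) (hm1 : m ≤ 1) (h0 : g a = 0 ∨ g (b / m) = 0)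
    (hx : x ∈ Ioo a b) : g x ≤ 0 := by
  have hL : 0 < b - a := sub_pos.2 hab
  have ht0 : 0 < (b - x) / (b - a) := div_pos (by linarith [hx.2]) hL
  have ht1 : (b - x) / (b - a) < 1 := (div_lt_one hL).2 (by linarith [hx.1])
  have hs0 : 0 < ((b - x) / (b - a)) ^ α := rpow_pos_of_pos ht0 α
  have hs1 : ((b - x) / (b - a)) ^ α < 1 := rpow_lt_one ht0.le ht1 hα
  refine (hg.le_of_mem_Icc ha hab hm hm1 (Ioo_subset_Icc_self hx)).trans_eq ?_
  rcases h0 with h0 | h0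
  · rw [h0, zero_rpow hs0.ne', zero_mul]
  · rw [h0, zero_rpow (mul_pos hm (sub_pos.2 hs1)).ne', mul_zero]

variable {u : ℝ → ℝ} {q η : ℝ}

theorem abs_rpow_le_of_pos (hg : AlphaMLogConvexOn α m (Icc 0 (b / m)) fun x => |u x| ^ q)
    (ha : 0 ≤ a) (hab : a < b) (hm : 0 < m) (hm1 : m ≤ 1) (hη : η = |u a| / |u (b / m)| ^ m)
    (hηpos : 0 < η) (hx : x ∈ Icc a b) :
    |u x| ^ q ≤ (|u (b / m)| ^ m) ^ q * (η ^ q) ^ (((b - x) / (b - a)) ^ α) := by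
  have hM : 0 < |u (b / m)| ^ m :=
    (rpow_nonneg (abs_nonneg _) m).lt_of_ne' fun h => by simp [hη, h] at hηpos
  have hMq : (|u (b / m)| ^ m) ^ q = (|u (b / m)| ^ q) ^ m := by
    rw [← rpow_mul (abs_nonneg _), ← rpow_mul (abs_nonneg _), mul_comm]
  have hua : |u a| ^ q = η ^ q * (|u (b / m)| ^ q) ^ m := by
    rw [← hMq, ← mul_rpow hηpos.le hM.le, hη, div_mul_cancel₀ _ hM.ne']
  rw [hMq]
  exact hg.le_mul_rpow ha hab hm hm1 (by positivity) (by positivity) hua hx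

theorem abs_rpow_nonpos_of_eq_zero (hg : AlphaMLogConvexOn α m (Icc 0 (b / m)) fun x => |u x| ^ q)
    (ha : 0 ≤ a) (hab : a < b) (hα : 0 < α) (hm : 0 < m) (hm1 : m ≤ 1) (hq : 0 < q)
    (hη : 0 = |u a| / |u (b / m)| ^ m) (hx : x ∈ Ioo a b) : |u x| ^ q ≤ 0 := by
  refine hg.nonpos_of_eq_zero ha hab hα hm hm1 ?_ hx
  rcases div_eq_zero_iff.1 hη.symm with h | h
  · exact .inl (by rw [h, zero_rpow hq.ne'])
  · exact .inr (by rw [(rpow_eq_zero (abs_nonneg _) hm.ne').1 h, zero_rpow hq.ne'])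

end AlphaMLogConvexOn

theorem stmt4_general
    (I : Set ℝ)
    (hIci : Set.Ici (0:ℝ) ⊆ I)
    (f f' : ℝ → ℝ)
    (hderiv : ∀ x ∈ I, HasDerivAt f (f' x) x)
    (a b : ℝ) (ha : 0 ≤ a) (hab : a < b)
    (hint : IntervalIntegrable f' MeasureTheory.volume a b)
    (α m : ℝ) (hα : α ∈ Set.Ioc (0:ℝ) 1) (hm : m ∈ Set.Ioc (0:ℝ) 1)
    (p q : ℝ) (hp : 1 < p) (hq : 1 < q) (hpq : 1 / p + 1 / q = 1)
    (hconv : ∀ x ∈ Set.Icc (0:ℝ) (b / m), ∀ y ∈ Set.Icc (0:ℝ) (b / m), ∀ t ∈ Set.Icc (0:ℝ) 1,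
      |f' (t * x + m * (1 - t) * y)| ^ q ≤ (|f' (x)| ^ q) ^ (t ^ α) * (|f' (y)| ^ q) ^ (m * (1 - t ^ α)))
    (η : ℝ) (hη : η = |f' a| / |f' (b / m)| ^ m) :
    (η = 1 → |(f a + f b) / 2 - (1 / (b - a)) * ∫ x in a..b, f x| ≤ (b - a) * |f' (b / m)| ^ m *
      (2 / ((p + 1) * (p + 2))) ^ (1 / p)) ∧
    (η < 1 → |(f a + f b) / 2 - (1 / (b - a)) * ∫ x in a..b, f x| ≤ (b - a) * |f' (b / m)| ^ m *
      (2 / ((p + 1) * (p + 2))) ^ (1 / p) *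
      ((η ^ (α * q) - 1) / (α * q * Real.log η)) ^ (1 / q)) := by
  obtain ⟨hα0, hα1⟩ := hα
  obtain ⟨hm0, hm1⟩ := hm
  have hq0 : 0 < q := by linarith
  have hpq' : p.HolderConjugate q :=
    Real.holderConjugate_iff.2 ⟨hp, by simpa only [one_div] using hpq⟩
  have hderiv' : ∀ x ∈ Icc a b, HasDerivAt f (f' x) x := fun x hx => hderiv x (hIci (ha.trans hx.1))
  have hg : AlphaMLogConvexOn α m (Icc 0 (b / m)) fun x => |f' x| ^ q := hconv
  have bound := abs_trapezoid_sub_average_le hab hderiv' hint hpq'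
    (by positivity : 0 ≤ |f' (b / m)| ^ m)
  rcases (show 0 ≤ η from hη ▸ by positivity).eq_or_lt with hη0 | hηpos
  · refine ⟨fun h => by linarith, fun _ => ?_⟩
    have := bound 0 0 le_rfl intervalIntegrable_const (by simp) fun x hx => by
      simpa using hg.abs_rpow_nonpos_of_eq_zero ha hab hα0 hm0 hm1 hq0 (hη0.trans hη) hx
    rw [← hη0, log_zero, mul_zero, div_zero]
    simpa using this
  have hpt := fun x (hx : x ∈ Ioo a b) =>
    hg.abs_rpow_le_of_pos ha hab hm0 hm1 hη hηpos (Ioo_subset_Icc_self hx)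
  refine ⟨fun h1 => ?_, fun h1 => ?_⟩
  · simpa using bound 1 1 zero_le_one intervalIntegrable_const (by simp) fun x hx => by
      simpa [h1] using hpt x hx
  · set c := η ^ (α * q)
    have hc0 : 0 < c := by positivity
    have hc1 : c < 1 := rpow_lt_one hηpos.le h1 (by positivity)
    rw [← log_rpow hηpos]
    refine bound (fun x => c ^ ((b - x) / (b - a))) ((c - 1) / log c)
      (div_nonneg_of_nonpos (by linarith) (log_nonpos hc0.le hc1.le))
      (by apply Continuous.intervalIntegrable; fun_prop (disch := exact hc0.ne'))
      (integral_rpow_sub_div hab.ne hc0 hc1.ne).le fun x hx => (hpt x hx).trans ?_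
    exact mul_le_mul_of_nonneg_left (rpow_rpow_rpow_le_of_le_one hηpos h1.le hq0.le
      (sub_div_sub_mem_Icc hab (Ioo_subset_Icc_self hx)) hα1) (by positivity)

theorem stmt4
    (I : Set ℝ) (hIopen : IsOpen I) (hIconn : Set.OrdConnected I)
    (hIci : Set.Ici (0:ℝ) ⊆ I)
    (f f' : ℝ → ℝ)
    (hfpos : ∀ x ∈ I, 0 < f x)
    (hderiv : ∀ x ∈ I, HasDerivAt f (f' x) x)
    (a b : ℝ) (ha : 0 ≤ a) (hab : a < b)
    (hint : IntervalIntegrable f' MeasureTheory.volume a b)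
    (α m : ℝ) (hα : α ∈ Set.Ioc (0:ℝ) 1) (hm : m ∈ Set.Ioc (0:ℝ) 1)
    (p q : ℝ) (hp : 1 < p) (hq : 1 < q) (hpq : 1 / p + 1 / q = 1)
    (hconv : ∀ x ∈ Set.Icc (0:ℝ) (b / m), ∀ y ∈ Set.Icc (0:ℝ) (b / m), ∀ t ∈ Set.Icc (0:ℝ) 1,
      |f' (t * x + m * (1 - t) * y)| ^ q ≤ (|f' (x)| ^ q) ^ (t ^ α) * (|f' (y)| ^ q) ^ (m * (1 - t ^ α)))
    (η : ℝ) (hη : η = |f' a| / |f' (b / m)| ^ m) :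
    (η = 1 → |(f a + f b) / 2 - (1 / (b - a)) * ∫ x in a..b, f x| ≤ (b - a) * |f' (b / m)| ^ m *
      (2 / ((p + 1) * (p + 2))) ^ (1 / p)) ∧
    (η < 1 → |(f a + f b) / 2 - (1 / (b - a)) * ∫ x in a..b, f x| ≤ (b - a) * |f' (b / m)| ^ m *
      (2 / ((p + 1) * (p + 2))) ^ (1 / p) *
      ((η ^ (α * q) - 1) / (α * q * Real.log η)) ^ (1 / q)) :=
  stmt4_general I hIci f f' hderiv a b ha hab hint α m hα hm p q hp hq hpq hconv η hη
end
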